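/- Let n = km > 1 be a spoof odd perfect number with m composite, and let s be the positive integer with s² = k. If gcd(m, k) = 1 and m < s, then (m+1)/m + σ(s)/s < (m+1)/s + σ(s)/m, and moreover 1 + √(9/5) < (m+1)/s + σ(s)/m. -/

import Mathlib

open ArithmeticFunction
open scoped ArithmeticFunction.sigma

/-!
Since `m` is odd and composite, `m ≥ 9`, so the spoof equation gives
`σ(k)/k = 2m/(m+1) ≥ 9/5`. As `σ` is submultiplicative, `(σ(s)/s)² ≥ σ(s²)/s² ≥ 9/5`,
i.e. `σ(s) ≥ √(9/5) s`. The first inequality is a rearrangement inequality, since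
`m + 1 < s + 1 ≤ σ(s)` and `1/s < 1/m`. For the second, with `c = √(9/5) ≥ 1` and
`x = s/m ≥ 1`, `(m+1)/s + σ(s)/m > 1/x + c x ≥ 1 + c`.
-/

lemma Nat.nine_le_of_odd_of_not_prime {m : ℕ} (hodd : Odd m) (hm : 1 < m) (hp : ¬ m.Prime) :
    9 ≤ m := by
  have hmin : m.minFac.Prime := Nat.minFac_prime hm.ne'
  have hmin2 : m.minFac ≠ 2 := fun h ↦
    (Nat.not_even_iff_odd.2 hodd) (even_iff_two_dvd.2 (h ▸ m.minFac_dvd))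
  have hmin3 : 3 ≤ m.minFac := by have := hmin.two_le; omega
  calc 9 = 3 ^ 2 := rfl
    _ ≤ m.minFac ^ 2 := Nat.pow_le_pow_left hmin3 2
    _ ≤ m := Nat.minFac_sq_le_self (by omega) hp

lemma ArithmeticFunction.sigma_one_mul_le (a b : ℕ) : σ 1 (a * b) ≤ σ 1 a * σ 1 b := by
  simp only [sigma_one_apply]
  rw [Nat.divisors_mul, Finset.mul_def, Finset.sum_mul_sum, ← Finset.sum_product']
  exact Finset.sum_image_le_of_nonneg fun _ _ ↦ Nat.zero_le _

lemma ArithmeticFunction.succ_le_sigma_one {n : ℕ} (hn : 1 < n) : n + 1 ≤ σ 1 n := by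
  rw [sigma_one_apply, Nat.sum_divisors_eq_sum_properDivisors_add_self]
  have h1 : 1 ∈ n.properDivisors := Nat.one_mem_properDivisors_iff_one_lt.2 hn
  have := Finset.single_le_sum (f := fun d ↦ d) (fun _ _ ↦ Nat.zero_le _) h1
  omega

lemma nine_mul_le_five_mul_sigma_one_of_spoof {k m : ℕ} (hm : 9 ≤ m)
    (hspoof : σ 1 k * (m + 1) = 2 * (k * m)) : 9 * k ≤ 5 * σ 1 k := by
  refine Nat.le_of_mul_le_mul_right ?_ (Nat.succ_pos m)
  calc 9 * k * (m + 1) ≤ 5 * (2 * (k * m)) := by nlinarith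
    _ = 5 * σ 1 k * (m + 1) := by rw [← hspoof, mul_assoc]

lemma div_add_div_lt_div_add_div_of_lt {m s p q : ℝ} (hm : 0 < m) (hms : m < s) (hpq : p < q) :
    p / m + q / s < p / s + q / m := by
  have hs : 0 < s := hm.trans hms
  rw [div_add_div _ _ hm.ne' hs.ne', div_add_div _ _ hs.ne' hm.ne',
    div_lt_div_iff₀ (by positivity) (by positivity)]
  nlinarith [mul_pos (mul_pos (sub_pos.2 hms) (sub_pos.2 hpq)) (mul_pos hm hs)]

lemma one_add_le_div_add_mul_div {m s c : ℝ} (hm : 0 < m) (hms : m ≤ s) (hc : 1 ≤ c) :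
    1 + c ≤ m / s + c * s / m := by
  have hs : 0 < s := hm.trans_le hms
  rw [div_add_div _ _ hs.ne' hm.ne', le_div_iff₀ (by positivity)]
  nlinarith [mul_nonneg (sub_nonneg.2 hms) (by nlinarith : 0 ≤ c * s - m)]

lemma Real.sqrt_mul_le_of_mul_sq_le {x a b : ℝ} (hx : 0 ≤ x) (ha : 0 ≤ a) (hb : 0 ≤ b)
    (h : x * b ^ 2 ≤ a ^ 2) : √x * b ≤ a :=
  (pow_le_pow_iff_left₀ (by positivity) ha two_ne_zero).1 (by rwa [mul_pow, Real.sq_sqrt hx])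

theorem stmt_15_general (k m s : ℕ) (hm : 1 < m) (hodd : Odd (k * m))
    (hspoof : σ 1 k * (m + 1) = 2 * (k * m)) (hcomp : ¬ m.Prime)
    (hsq : s ^ 2 = k) (hlt : m < s) :
    ((m : ℝ) + 1) / (m : ℝ) + (σ 1 s : ℝ) / (s : ℝ) <
        ((m : ℝ) + 1) / (s : ℝ) + (σ 1 s : ℝ) / (m : ℝ) ∧
      1 + Real.sqrt (9 / 5) < ((m : ℝ) + 1) / (s : ℝ) + (σ 1 s : ℝ) / (m : ℝ) := by
  have hm9 : 9 ≤ m := Nat.nine_le_of_odd_of_not_prime (Nat.odd_mul.1 hodd).2 hm hcomp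
  have hσs : s + 1 ≤ σ 1 s := succ_le_sigma_one (hm.trans hlt)
  have habund : 9 * s ^ 2 ≤ 5 * σ 1 s ^ 2 := by
    subst hsq
    calc 9 * s ^ 2 ≤ 5 * σ 1 (s ^ 2) := nine_mul_le_five_mul_sigma_one_of_spoof hm9 hspoof
      _ ≤ 5 * σ 1 s ^ 2 := by rw [sq, sq]; exact Nat.mul_le_mul_left 5 (sigma_one_mul_le s s)
  have hmR : (0 : ℝ) < m := by positivity
  have hltR : (m : ℝ) < s := by exact_mod_cast hlt
  have hσm : (m : ℝ) + 1 < σ 1 s := by exact_mod_cast (by omega : m + 1 < σ 1 s)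
  refine ⟨div_add_div_lt_div_add_div_of_lt hmR hltR hσm, ?_⟩
  have habundR : (9 * s ^ 2 : ℝ) ≤ 5 * σ 1 s ^ 2 := by exact_mod_cast habund
  have hc : √(9 / 5) * s ≤ σ 1 s :=
    Real.sqrt_mul_le_of_mul_sq_le (by norm_num) (Nat.cast_nonneg _) (Nat.cast_nonneg _)
      (by linarith)
  calc 1 + √(9 / 5) ≤ m / s + √(9 / 5) * s / m :=
        one_add_le_div_add_mul_div hmR hltR.le (Real.one_le_sqrt.2 (by norm_num))
    _ < (m + 1) / s + σ 1 s / m := by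
        have hs : (0 : ℝ) < s := hmR.trans hltR
        exact add_lt_add_of_lt_of_le (by gcongr; linarith) (by gcongr)

theorem stmt_15 (k m s : ℕ) (hk : 1 < k) (hm : 1 < m) (hodd : Odd (k * m))
    (hspoof : σ 1 k * (m + 1) = 2 * (k * m)) (hcomp : ¬ m.Prime)
    (hs : 0 < s) (hsq : s ^ 2 = k) (hgcd : Nat.gcd m k = 1) (hlt : m < s) :
    ((m : ℝ) + 1) / (m : ℝ) + (σ 1 s : ℝ) / (s : ℝ) <
        ((m : ℝ) + 1) / (s : ℝ) + (σ 1 s : ℝ) / (m : ℝ) ∧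
      1 + Real.sqrt (9 / 5) < ((m : ℝ) + 1) / (s : ℝ) + (σ 1 s : ℝ) / (m : ℝ) :=
  stmt_15_general k m s hm hodd hspoof hcomp hsq hlt
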